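/- Let $M \in \mathbb{R}^{d\times d}$ be positive semidefinite. There exist $\varepsilon_0 > 0$ (depending on $\alpha \in \mathbb{R}^d$ with all coordinates nonzero) and $C > 0$ (depending on $d$ and $M$) such that for all $0 < \varepsilon \leq \varepsilon_0$ and all $y = Mu$ with $u \geq 0$, the minimizer $x(y)$ of $D(x, \varepsilon\alpha^2)$ over $\{x \geq 0 : Mx = y\}$ satisfies $\|x(y)\| \leq C(1 + \|y\|^2)$. -/

import Mathlib

open Matrix

/-- Euclidean norm on `Fin n → ℝ`. -/
noncomputable def enorm {n : ℕ} (x : Fin n → ℝ) : ℝ := Real.sqrt (∑ i, x i ^ 2)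

/-- Bregman divergence of the entropy mirror map. -/
noncomputable def breg {n : ℕ} (x y : Fin n → ℝ) : ℝ :=
  (1/4) * ∑ i, (x i * Real.log (x i / y i) - x i + y i)

/-!
Write `ℓᵢ = -log (ε αᵢ²)`. For `t ≥ 0` the entropy term `t log (t / c) - t + c` lies between
`ℓ t - 1 + c` and `t² + ℓ t + c`, so comparing the minimiser `x` with any feasible `v` gives
`min ℓ · ∑ x ≤ max ℓ · ∑ v + ∑ v² + d`. For small `ε` all `ℓᵢ` are large and comparable, whence
`∑ x ≤ 3 ∑ v + ∑ v² + d`. By the conic Carathéodory theorem `y = Mu` is a nonnegative combination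
of linearly independent columns of `M`, and on each of the finitely many independent sets of
columns the coefficients are bounded linearly by `‖y‖`; this yields a feasible `v` with
`‖v‖ ≤ K ‖y‖`.
-/

open Function

section ConicCaratheodory

variable {ι E : Type*} [Fintype ι]

theorem exists_nonneg_sub_smul_support_ssubset (u z : ι → ℝ) (hu : 0 ≤ u)
    (hzu : support z ⊆ support u) (hz : ∃ i, 0 < z i) :
    ∃ t : ℝ, 0 ≤ u - t • z ∧ support (u - t • z) ⊂ support u := by
  classical
  obtain ⟨j, hj⟩ := hz
  obtain ⟨i₀, hi₀, hmin⟩ := Finset.exists_min_image {i | 0 < z i} (fun i => u i / z i)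
    ⟨j, by simpa using hj⟩
  rw [Finset.mem_filter_univ] at hi₀
  refine ⟨u i₀ / z i₀, fun i => ?_, ?_, fun hsub => ?_⟩
  · rcases le_or_gt (z i) 0 with hzi | hzi
    · have := mul_nonpos_of_nonneg_of_nonpos (div_nonneg (hu i₀) hi₀.le) hzi
      simp only [Pi.zero_apply, Pi.sub_apply, Pi.smul_apply, smul_eq_mul]
      linarith [show 0 ≤ u i from hu i]
    · have := (le_div_iff₀ hzi).mp (hmin i (by simpa using hzi))
      simpa using this
  · exact (support_sub _ _).trans
      (Set.union_subset le_rfl ((support_smul_subset_right _ _).trans hzu))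
  · exact hsub (hzu hi₀.ne') (by simp [div_mul_cancel₀ _ hi₀.ne'])

variable [AddCommGroup E] [Module ℝ E]

theorem exists_ne_zero_of_not_linearIndepOn {b : ι → E} {s : Set ι}
    (h : ¬ LinearIndepOn ℝ b s) :
    ∃ z : ι → ℝ, ∑ i, z i • b i = 0 ∧ support z ⊆ s ∧ z ≠ 0 := by
  obtain ⟨l, hls, hlb, hl⟩ := linearDepOn_iff'.mp h
  refine ⟨l, ?_, ?_, Finsupp.coe_eq_zero.not.mpr hl⟩
  · rwa [Finsupp.linearCombination_apply, Finsupp.sum_fintype _ _ (by simp)] at hlb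
  · rwa [Finsupp.fun_support_eq, ← Finsupp.mem_supported ℝ]

theorem exists_nonneg_linearIndepOn_support (b : ι → E) (u : ι → ℝ) (hu : 0 ≤ u) :
    ∃ v : ι → ℝ, 0 ≤ v ∧ ∑ i, v i • b i = ∑ i, u i • b i ∧ LinearIndepOn ℝ b (support v) := by
  induction hn : (support u).ncard using Nat.strong_induction_on generalizing u with
  | _ n ih =>
  by_cases hli : LinearIndepOn ℝ b (support u)
  · exact ⟨u, hu, rfl, hli⟩
  obtain ⟨z, hzb, hzu, hpos⟩ :
      ∃ z : ι → ℝ, ∑ i, z i • b i = 0 ∧ support z ⊆ support u ∧ ∃ i, 0 < z i := by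
    obtain ⟨z, hzb, hzu, hz⟩ := exists_ne_zero_of_not_linearIndepOn hli
    obtain ⟨i, hi⟩ := ne_iff.mp hz
    rcases hi.lt_or_gt with hneg | hpos
    · exact ⟨-z, by simp [hzb], by rwa [support_neg], i, by simpa using hneg⟩
    · exact ⟨z, hzb, hzu, i, hpos⟩
  obtain ⟨t, hnonneg, hssub⟩ := exists_nonneg_sub_smul_support_ssubset u z hu hzu hpos
  obtain ⟨v, hv, hvb, hvli⟩ := ih _ (hn ▸ Set.ncard_lt_ncard hssub) _ hnonneg rfl
  refine ⟨v, hv, hvb.trans ?_, hvli⟩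
  simp [sub_smul, Finset.sum_sub_distrib, mul_smul, ← Finset.smul_sum, hzb]

end ConicCaratheodory

section NormBound

variable {ι E : Type*} [Fintype ι] [NormedAddCommGroup E] [NormedSpace ℝ E]

theorem exists_norm_le_of_linearIndepOn {b : ι → E} {s : Set ι} (hs : LinearIndepOn ℝ b s) :
    ∃ C, ∀ v : ι → ℝ, support v ⊆ s → ‖v‖ ≤ C * ‖∑ i, v i • b i‖ := by
  classical
  obtain ⟨K, -, hK⟩ := (Fintype.linearCombination ℝ (fun i : s => b i)).exists_antilipschitzWith
    (LinearMap.ker_eq_bot.mpr (linearIndependent_iff_injective_fintypeLinearCombination.mp hs))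
  refine ⟨K, fun v hv => ?_⟩
  have hvs : ∀ i ∉ s, v i = 0 := fun i hi => notMem_support.mp (mt (@hv i) hi)
  have hnorm : ‖v‖ ≤ ‖fun i : s => v i‖ := by
    refine pi_norm_le_iff_of_nonneg (norm_nonneg _) |>.mpr fun i => ?_
    by_cases hi : i ∈ s
    · exact norm_le_pi_norm (fun i : s => v i) ⟨i, hi⟩
    · simp [hvs i hi]
  have hsum : ∑ i : s, v i • b i = ∑ i, v i • b i := by
    rw [Finset.sum_set_coe (f := fun i => v i • b i)]
    exact Finset.sum_subset (Finset.subset_univ _) fun i _ hi => by simp [hvs i (by simpa using hi)]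
  calc ‖v‖ ≤ ‖fun i : s => v i‖ := hnorm
    _ ≤ K * ‖∑ i : s, v i • b i‖ := ZeroHomClass.bound_of_antilipschitz _ hK _
    _ = K * ‖∑ i, v i • b i‖ := by rw [hsum]

theorem exists_nonneg_norm_le (b : ι → E) :
    ∃ K, 0 ≤ K ∧ ∀ u : ι → ℝ, 0 ≤ u →
      ∃ v : ι → ℝ, 0 ≤ v ∧ ∑ i, v i • b i = ∑ i, u i • b i ∧ ‖v‖ ≤ K * ‖∑ i, u i • b i‖ := by
  have hC : ∀ s : Set ι, ∃ C, LinearIndepOn ℝ b s →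
      ∀ v : ι → ℝ, support v = s → ‖v‖ ≤ C * ‖∑ i, v i • b i‖ := by
    intro s
    by_cases hs : LinearIndepOn ℝ b s
    · obtain ⟨C, hC⟩ := exists_norm_le_of_linearIndepOn hs
      exact ⟨C, fun _ v hv => hC v hv.subset⟩
    · exact ⟨0, fun h => (hs h).elim⟩
  choose C hC using hC
  refine ⟨max 0 (⨆ s, C s), le_max_left _ _, fun u hu => ?_⟩
  obtain ⟨v, hv, hvb, hvli⟩ := exists_nonneg_linearIndepOn_support b u hu
  refine ⟨v, hv, hvb, ?_⟩
  calc ‖v‖ ≤ C (support v) * ‖∑ i, v i • b i‖ := hC _ hvli v rfl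
    _ ≤ max 0 (⨆ s, C s) * ‖∑ i, u i • b i‖ := by
      rw [hvb]
      gcongr
      exact (le_ciSup (Finite.bddAbove_range C) _).trans (le_max_right _ _)

end NormBound

section Entropy

open Real

lemma mul_log_div {t c : ℝ} (ht : 0 ≤ t) (hc : 0 < c) :
    t * log (t / c) = t * log t - t * log c := by
  rcases ht.eq_or_lt with rfl | ht
  · simp
  · rw [log_div ht.ne' hc.ne', mul_sub]

lemma mul_log_le_mul_sub_self {t : ℝ} (ht : 0 ≤ t) : t * log t ≤ t * t - t := by
  rcases ht.eq_or_lt with rfl | ht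
  · simp
  · nlinarith [log_le_sub_one_of_pos ht]

lemma le_mul_log_div_sub_add {t c : ℝ} (ht : 0 ≤ t) (hc : 0 < c) :
    -log c * t - 1 + c ≤ t * log (t / c) - t + c := by
  rw [mul_log_div ht hc]
  linarith [self_sub_one_le_mul_log ht]

lemma mul_log_div_sub_add_le {t c : ℝ} (ht : 0 ≤ t) (hc : 0 < c) :
    t * log (t / c) - t + c ≤ t ^ 2 - log c * t + c := by
  rw [mul_log_div ht hc]
  nlinarith [mul_log_le_mul_sub_self ht]

theorem mul_sum_le_of_breg_le {n : ℕ} {c x v : Fin n → ℝ} (hc : ∀ i, 0 < c i)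
    (hx : 0 ≤ x) (hv : 0 ≤ v)
    {ℓ₀ ℓ₁ : ℝ} (hℓ₀ : ∀ i, ℓ₀ ≤ -log (c i)) (hℓ₁ : ∀ i, -log (c i) ≤ ℓ₁)
    (h : breg x c ≤ breg v c) :
    ℓ₀ * ∑ i, x i ≤ ℓ₁ * ∑ i, v i + ∑ i, v i ^ 2 + n := by
  have hlow : ∀ i, ℓ₀ * x i - 1 + c i ≤ x i * log (x i / c i) - x i + c i := fun i =>
    (le_mul_log_div_sub_add (hx i) (hc i)).trans'
      (by linarith [mul_le_mul_of_nonneg_right (hℓ₀ i) (hx i)])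
  have hup : ∀ i, v i * log (v i / c i) - v i + c i ≤ v i ^ 2 + ℓ₁ * v i + c i := fun i =>
    (mul_log_div_sub_add_le (hv i) (hc i)).trans
      (by linarith [mul_le_mul_of_nonneg_right (hℓ₁ i) (hv i)])
  have hsum : ∑ i, (ℓ₀ * x i - 1 + c i) ≤ ∑ i, (v i ^ 2 + ℓ₁ * v i + c i) :=
    calc _ ≤ ∑ i, (x i * log (x i / c i) - x i + c i) := Finset.sum_le_sum fun i _ => hlow i
      _ ≤ ∑ i, (v i * log (v i / c i) - v i + c i) := by unfold breg at h; linarith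
      _ ≤ _ := Finset.sum_le_sum fun i _ => hup i
  simp only [Finset.sum_add_distrib, Finset.sum_sub_distrib, ← Finset.mul_sum,
    Finset.sum_const, Finset.card_univ, Fintype.card_fin, nsmul_eq_mul, mul_one] at hsum
  linarith

theorem sum_le_of_breg_le_of_le_exp {n : ℕ} {a x v : Fin n → ℝ} (ha : ∀ i, 0 < a i) {ε : ℝ}
    (hε : 0 < ε) (hεle : ε ≤ exp (-(2 * ∑ i, |log (a i)| + 2))) (hx : 0 ≤ x) (hv : 0 ≤ v)
    (h : breg x (fun i => ε * a i) ≤ breg v (fun i => ε * a i)) :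
    ∑ i, x i ≤ 3 * ∑ i, v i + ∑ i, v i ^ 2 + n := by
  set A := ∑ i, |log (a i)|
  have hA : ∀ i, |log (a i)| ≤ A := fun i =>
    Finset.single_le_sum (f := fun i => |log (a i)|) (fun i _ => abs_nonneg _) (Finset.mem_univ i)
  have hL : 2 * A + 2 ≤ -log ε := by linarith [(log_le_iff_le_exp hε).mpr hεle]
  have hlog : ∀ i, -log (ε * a i) = -log ε - log (a i) := fun i => by
    rw [log_mul hε.ne' (ha i).ne']; ring
  have key := mul_sum_le_of_breg_le (fun i => mul_pos hε (ha i)) hx hv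
    (ℓ₀ := -log ε - A) (ℓ₁ := -log ε + A)
    (fun i => by rw [hlog]; linarith [(abs_le.mp (hA i)).2])
    (fun i => by rw [hlog]; linarith [(abs_le.mp (hA i)).1]) h
  have hV : 0 ≤ ∑ i, v i := Finset.sum_nonneg fun i _ => hv i
  have hB : 0 ≤ ∑ i, v i ^ 2 + (n : ℝ) := by positivity
  have hA₀ : 0 ≤ A := Finset.sum_nonneg fun i _ => abs_nonneg _
  have hLA : 0 < -log ε - A := by linarith
  -- `-log ε ≥ 2A + 2` gives `-log ε + A ≤ 3 (-log ε - A)` and `1 ≤ -log ε - A`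
  refine le_of_mul_le_mul_left ?_ hLA
  nlinarith [mul_nonneg (by linarith : 0 ≤ -2 * log ε - 4 * A) hV,
    mul_nonneg (by linarith : 0 ≤ -log ε - A - 1) hB]

end Entropy

lemma norm_le_enorm {n : ℕ} (y : Fin n → ℝ) : ‖y‖ ≤ _root_.enorm y :=
  pi_norm_le_iff_of_nonneg (Real.sqrt_nonneg _) |>.mpr fun i => by
    rw [Real.norm_eq_abs, ← Real.sqrt_sq_eq_abs]
    exact Real.sqrt_le_sqrt (Finset.single_le_sum (f := fun j => y j ^ 2)
      (fun j _ => sq_nonneg _) (Finset.mem_univ i))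

lemma enorm_le_sum_of_nonneg {n : ℕ} {x : Fin n → ℝ} (hx : 0 ≤ x) :
    _root_.enorm x ≤ ∑ i, x i := by
  have hX : 0 ≤ ∑ i, x i := Finset.sum_nonneg fun i _ => hx i
  rw [_root_.enorm, Real.sqrt_le_left hX]
  exact Finset.sum_sq_le_sq_sum_of_nonneg fun i _ => hx i

lemma sum_le_card_mul_norm {ι : Type*} [Fintype ι] (v : ι → ℝ) :
    ∑ i, v i ≤ Fintype.card ι * ‖v‖ :=
  (Finset.sum_le_sum fun i _ => (le_abs_self _).trans (norm_le_pi_norm v i)).trans (by simp)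

lemma mulVec_eq_sum_smul {m n : Type*} [Fintype n] (M : Matrix m n ℝ) (v : n → ℝ) :
    M *ᵥ v = ∑ j, v j • Mᵀ j := by
  simp [mulVec_eq_sum]

theorem stmt_12_general {d : ℕ} (M : Matrix (Fin d) (Fin d) ℝ)
    (α : Fin d → ℝ) (hα : ∀ i, α i ≠ 0) :
    ∃ ε₀ > (0:ℝ), ∃ C > (0:ℝ), ∀ ε : ℝ, 0 < ε → ε ≤ ε₀ →
      ∀ u : Fin d → ℝ, 0 ≤ u →
        ∀ x : Fin d → ℝ, 0 ≤ x → M.mulVec x = M.mulVec u →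
          (∀ x' : Fin d → ℝ, 0 ≤ x' → M.mulVec x' = M.mulVec u →
            breg x (fun i => ε * (α i) ^ 2) ≤ breg x' (fun i => ε * (α i) ^ 2)) →
          _root_.enorm x ≤ C * (1 + _root_.enorm (M.mulVec u) ^ 2) := by
  obtain ⟨K, hK, hfeas⟩ := exists_nonneg_norm_le Mᵀ
  refine ⟨Real.exp (-(2 * ∑ i, |Real.log (α i ^ 2)| + 2)), Real.exp_pos _,
    3 * d * K + (d * K) ^ 2 + d + 1, by positivity, ?_⟩
  intro ε hε hεle u hu x hx _ hmin
  obtain ⟨v, hv, hMv, hvK⟩ := hfeas u hu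
  simp only [← mulVec_eq_sum_smul] at hMv hvK
  have hX := sum_le_of_breg_le_of_le_exp (a := fun i => α i ^ 2) (fun i => sq_pos_of_ne_zero (hα i))
    hε hεle hx hv (hmin v hv hMv)
  set e := _root_.enorm (M *ᵥ u)
  have hV : ∑ i, v i ≤ d * K * e :=
    calc ∑ i, v i ≤ d * ‖v‖ := by simpa using sum_le_card_mul_norm v
      _ ≤ d * (K * e) := by gcongr; exact hvK.trans (by gcongr; exact norm_le_enorm _)
      _ = d * K * e := by ring
  have hV₂ : ∑ i, v i ^ 2 ≤ (∑ i, v i) ^ 2 := Finset.sum_sq_le_sq_sum_of_nonneg fun i _ => hv i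
  have hV₀ : 0 ≤ ∑ i, v i := Finset.sum_nonneg fun i _ => hv i
  have he : 0 ≤ e := (norm_nonneg _).trans (norm_le_enorm _)
  calc _root_.enorm x ≤ ∑ i, x i := enorm_le_sum_of_nonneg hx
    _ ≤ 3 * ∑ i, v i + ∑ i, v i ^ 2 + d := hX
    _ ≤ 3 * (d * K * e) + (d * K * e) ^ 2 + d := by nlinarith [pow_le_pow_left₀ hV₀ hV 2]
    _ ≤ _ := by
      have hdK : 0 ≤ (d : ℝ) * K := by positivity
      nlinarith [mul_nonneg hdK (add_nonneg (sq_nonneg (e - 1)) he)]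

/-- The constrained Bregman projection `x(y) = argmin {D(x, εα²) : x ≥ 0, Mx = y}` for
`y = Mu`, `u ≥ 0`, satisfies `‖x(y)‖ ≤ C(1 + ‖y‖²)` for all small enough `ε`. -/
theorem stmt_12 {d : ℕ} (M : Matrix (Fin d) (Fin d) ℝ) (hM : M.PosSemidef)
    (α : Fin d → ℝ) (hα : ∀ i, α i ≠ 0) :
    ∃ ε₀ > (0:ℝ), ∃ C > (0:ℝ), ∀ ε : ℝ, 0 < ε → ε ≤ ε₀ →
      ∀ u : Fin d → ℝ, 0 ≤ u →
        ∀ x : Fin d → ℝ, 0 ≤ x → M.mulVec x = M.mulVec u →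
          (∀ x' : Fin d → ℝ, 0 ≤ x' → M.mulVec x' = M.mulVec u →
            breg x (fun i => ε * (α i) ^ 2) ≤ breg x' (fun i => ε * (α i) ^ 2)) →
          _root_.enorm x ≤ C * (1 + _root_.enorm (M.mulVec u) ^ 2) :=
  stmt_12_general M α hα
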